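/- For every H ∈ (0,1) and every b > 0, the integral of |ξ|^{1−2H}/(ξ⁴ + τ²) over the region D₂(b) := {(τ, ξ) ∈ ℝ² : max(|τ|^{H/2}, |ξ|^H) ≥ b} is at most (2(2−H)/(H(1−H))) · b^{−2}. -/

import Mathlib

/-!
Cover `D₂(b)` by `{|τ| ≥ T} × ℝ` and `{|τ| < T} × {|ξ| ≥ S}`, where `T = b^{2/H}` and
`S = b^{1/H}`. On the first piece, splitting the `ξ`-integral at `|ξ| = |τ|^{1/2}`, where `ξ⁴`
and `τ²` balance, gives `∫ |ξ|^{1-2H}/(ξ⁴+τ²) dξ ≤ 2/(1-H²) |τ|^{-1-H}`, and integrating over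
`|τ| ≥ T` contributes `4/(H(1-H²)) b^{-2}`. On the second piece, dropping `τ²` leaves
`|ξ|^{-3-2H}`, whose integral over `|ξ| ≥ S`, times the length `2T` of the `τ`-interval, is
`2/(1+H) b^{-2}`. The two add up to `2(2-H)/(H(1-H)) b^{-2}`.
The estimates are carried out for `ℝ≥0∞`-valued integrals, where Tonelli needs no
integrability, and transferred to the Bochner integral at the end.
-/

open MeasureTheory Set Real
open scoped ENNReal

theorem lintegral_comp_abs (g : ℝ → ℝ≥0∞) : ∫⁻ x, g |x| = 2 * ∫⁻ x in Ioi 0, g x := by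
  have h_neg : ∫⁻ x in Iic 0, g |x| = ∫⁻ x in Ioi 0, g x :=
    calc ∫⁻ x in Iic 0, g |x| = ∫⁻ x in Iic 0, g (-x) :=
          setLIntegral_congr_fun measurableSet_Iic fun x hx => by rw [abs_of_nonpos hx]
      _ = ∫⁻ x in Ici 0, g x := by
          simpa using (Measure.measurePreserving_neg volume).setLIntegral_comp_preimage_emb
            (MeasurableEquiv.neg ℝ).measurableEmbedding g (Ici 0)
      _ = ∫⁻ x in Ioi 0, g x := setLIntegral_congr Ioi_ae_eq_Ici.symm
  have h_pos : ∫⁻ x in Ioi 0, g |x| = ∫⁻ x in Ioi 0, g x :=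
    setLIntegral_congr_fun measurableSet_Ioi fun x hx => by rw [abs_of_pos hx]
  rw [← setLIntegral_univ, ← Iic_union_Ioi (a := 0),
    lintegral_union measurableSet_Ioi (Iic_disjoint_Ioi le_rfl), h_neg, h_pos, two_mul]

theorem setLIntegral_abs_preimage (g : ℝ → ℝ≥0∞) {s : Set ℝ} (hs : MeasurableSet s) :
    ∫⁻ x in abs ⁻¹' s, g |x| = 2 * ∫⁻ x in s ∩ Ioi 0, g x := by
  rw [← setLIntegral_indicator hs, ← lintegral_comp_abs,
    ← lintegral_indicator (measurable_abs hs)]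
  rfl

theorem lintegral_Ioi_rpow_of_lt {p c : ℝ} (hp : p < -1) (hc : 0 < c) :
    ∫⁻ x in Ioi c, ENNReal.ofReal (x ^ p) = ENNReal.ofReal (c ^ (p + 1) / -(p + 1)) := by
  rw [← ofReal_integral_eq_lintegral_ofReal (integrableOn_Ioi_rpow_of_lt hp hc)
    ((ae_restrict_iff' measurableSet_Ioi).2 (ae_of_all _ fun x hx =>
      rpow_nonneg (hc.trans hx).le p)), integral_Ioi_rpow_of_lt hp hc, div_neg, neg_div]

theorem lintegral_Ioc_rpow {q c : ℝ} (hq : -1 < q) (hc : 0 ≤ c) :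
    ∫⁻ x in Ioc 0 c, ENNReal.ofReal (x ^ q) = ENNReal.ofReal (c ^ (q + 1) / (q + 1)) := by
  rw [← ofReal_integral_eq_lintegral_ofReal (intervalIntegral.intervalIntegrable_rpow' hq).1
    ((ae_restrict_iff' measurableSet_Ioc).2 (ae_of_all _ fun x hx => rpow_nonneg hx.1.le q)),
    ← intervalIntegral.integral_of_le hc, integral_rpow (Or.inl hq),
    zero_rpow (by linarith), sub_zero]

theorem setLIntegral_abs_rpow_of_le_abs {p c : ℝ} (hp : p < -1) (hc : 0 < c) :
    ∫⁻ x in {x | c ≤ |x|}, ENNReal.ofReal (|x| ^ p) =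
      ENNReal.ofReal (2 * c ^ (p + 1) / -(p + 1)) := by
  rw [show {x : ℝ | c ≤ |x|} = abs ⁻¹' Ici c from rfl,
    setLIntegral_abs_preimage (fun x => ENNReal.ofReal (x ^ p)) measurableSet_Ici,
    inter_eq_left.2 (Ici_subset_Ioi.2 hc), setLIntegral_congr Ioi_ae_eq_Ici.symm,
    lintegral_Ioi_rpow_of_lt hp hc, ← ENNReal.ofReal_ofNat 2, ← ENNReal.ofReal_mul zero_le_two,
    mul_div_assoc]

theorem setLIntegral_abs_rpow_of_abs_le {q c : ℝ} (hq : -1 < q) (hc : 0 ≤ c) :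
    ∫⁻ x in {x | |x| ≤ c}, ENNReal.ofReal (|x| ^ q) =
      ENNReal.ofReal (2 * c ^ (q + 1) / (q + 1)) := by
  rw [show {x : ℝ | |x| ≤ c} = abs ⁻¹' Iic c from rfl,
    setLIntegral_abs_preimage (fun x => ENNReal.ofReal (x ^ q)) measurableSet_Iic,
    Iic_inter_Ioi, lintegral_Ioc_rpow hq hc, ← ENNReal.ofReal_ofNat 2,
    ← ENNReal.ofReal_mul zero_le_two, mul_div_assoc]

theorem abs_rpow_div_pow_four_add_le {a t ξ : ℝ} (ht : 0 ≤ t) (hξ : ξ ≠ 0) :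
    |ξ| ^ a / (ξ ^ 4 + t) ≤ |ξ| ^ (a - 4) := by
  rw [show a - 4 = a - (4 : ℕ) by norm_num, rpow_sub_natCast (abs_ne_zero.2 hξ),
    Even.pow_abs (by decide)]
  exact div_le_div_of_nonneg_left (by positivity) (by positivity) (by linarith)

theorem setLIntegral_abs_rpow_div_pow_four_add_le_of_le_abs {a c t : ℝ} (ha : a < 3)
    (hc : 0 < c) (ht : 0 ≤ t) :
    ∫⁻ ξ in {ξ | c ≤ |ξ|}, ENNReal.ofReal (|ξ| ^ a / (ξ ^ 4 + t)) ≤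
      ENNReal.ofReal (2 * c ^ (a - 3) / (3 - a)) := by
  calc ∫⁻ ξ in {ξ | c ≤ |ξ|}, ENNReal.ofReal (|ξ| ^ a / (ξ ^ 4 + t))
      ≤ ∫⁻ ξ in {ξ | c ≤ |ξ|}, ENNReal.ofReal (|ξ| ^ (a - 4)) :=
        setLIntegral_mono (by fun_prop) fun ξ hξ => ENNReal.ofReal_le_ofReal <|
          abs_rpow_div_pow_four_add_le ht (abs_pos.1 (hc.trans_le hξ))
    _ = ENNReal.ofReal (2 * c ^ (a - 3) / (3 - a)) := by
        rw [setLIntegral_abs_rpow_of_le_abs (by linarith) hc, show a - 4 + 1 = a - 3 by ring, show -(a - 3) = 3 - a by ring]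

theorem setLIntegral_abs_rpow_div_pow_four_add_le_of_abs_le {a c t : ℝ} (ha : -1 < a)
    (hc : 0 ≤ c) (ht : 0 < t) :
    ∫⁻ ξ in {ξ | |ξ| ≤ c}, ENNReal.ofReal (|ξ| ^ a / (ξ ^ 4 + t)) ≤
      ENNReal.ofReal (2 * c ^ (a + 1) / (a + 1) / t) := by
  calc ∫⁻ ξ in {ξ | |ξ| ≤ c}, ENNReal.ofReal (|ξ| ^ a / (ξ ^ 4 + t))
      ≤ ∫⁻ ξ in {ξ | |ξ| ≤ c}, ENNReal.ofReal (|ξ| ^ a) * ENNReal.ofReal t⁻¹ :=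
        setLIntegral_mono (by fun_prop) fun ξ _ => by
          rw [← ENNReal.ofReal_mul (by positivity), ← div_eq_mul_inv]
          exact ENNReal.ofReal_le_ofReal <|
            div_le_div_of_nonneg_left (by positivity) ht (le_add_of_nonneg_left (by positivity))
    _ = ENNReal.ofReal (2 * c ^ (a + 1) / (a + 1) / t) := by
        rw [lintegral_mul_const' _ _ ENNReal.ofReal_ne_top,
          setLIntegral_abs_rpow_of_abs_le ha hc,
          ← ENNReal.ofReal_mul (div_nonneg (by positivity) (by linarith)),
          div_eq_mul_inv _ t]

theorem lintegral_abs_rpow_div_pow_four_add_pow_four_le {a r : ℝ} (ha : -1 < a) (ha' : a < 3)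
    (hr : 0 < r) :
    ∫⁻ ξ, ENNReal.ofReal (|ξ| ^ a / (ξ ^ 4 + r ^ 4)) ≤
      ENNReal.ofReal ((2 / (a + 1) + 2 / (3 - a)) * r ^ (a - 3)) := by
  -- Below `|ξ| = r` drop `ξ⁴`, above it drop `r⁴`.
  have h_cover : {ξ : ℝ | |ξ| ≤ r} ∪ {ξ | r ≤ |ξ|} = univ :=
    eq_univ_of_forall fun ξ => le_total |ξ| r
  have h_head : 2 * r ^ (a + 1) / (a + 1) / r ^ 4 = 2 / (a + 1) * r ^ (a - 3) := by
    rw [show a - 3 = a + 1 - (4 : ℕ) by push_cast; ring, rpow_sub_natCast hr.ne']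
    ring
  calc ∫⁻ ξ, ENNReal.ofReal (|ξ| ^ a / (ξ ^ 4 + r ^ 4))
      ≤ (∫⁻ ξ in {ξ | |ξ| ≤ r}, ENNReal.ofReal (|ξ| ^ a / (ξ ^ 4 + r ^ 4))) +
          ∫⁻ ξ in {ξ | r ≤ |ξ|}, ENNReal.ofReal (|ξ| ^ a / (ξ ^ 4 + r ^ 4)) := by
        rw [← setLIntegral_univ, ← h_cover]
        exact lintegral_union_le _ _ _
    _ ≤ ENNReal.ofReal (2 * r ^ (a + 1) / (a + 1) / r ^ 4) +
          ENNReal.ofReal (2 * r ^ (a - 3) / (3 - a)) :=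
        add_le_add (setLIntegral_abs_rpow_div_pow_four_add_le_of_abs_le ha hr.le (by positivity))
          (setLIntegral_abs_rpow_div_pow_four_add_le_of_le_abs ha' hr (by positivity))
    _ = ENNReal.ofReal ((2 / (a + 1) + 2 / (3 - a)) * r ^ (a - 3)) := by
        have : 0 < a + 1 := by linarith
        have : 0 < 3 - a := by linarith
        rw [← ENNReal.ofReal_add (by positivity) (by positivity), h_head]
        congr 1
        ring

theorem lintegral_abs_rpow_div_pow_four_add_sq_le {H τ : ℝ} (hH : -1 < H) (hH' : H < 1)
    (hτ : τ ≠ 0) :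
    ∫⁻ ξ, ENNReal.ofReal (|ξ| ^ (1 - 2 * H) / (ξ ^ 4 + τ ^ 2)) ≤
      ENNReal.ofReal (2 / (1 - H ^ 2) * |τ| ^ (-1 - H)) := by
  have hr : 0 < √|τ| := sqrt_pos.2 (abs_pos.2 hτ)
  have hr4 : √|τ| ^ 4 = τ ^ 2 := by
    rw [show 4 = 2 * 2 from rfl, pow_mul, sq_sqrt (abs_nonneg τ), sq_abs]
  have hr_exp : √|τ| ^ (1 - 2 * H - 3) = |τ| ^ (-1 - H) := by
    rw [sqrt_eq_rpow, ← rpow_mul (abs_nonneg τ)]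
    congr 1
    ring
  have h_const : 2 / (1 - 2 * H + 1) + 2 / (3 - (1 - 2 * H)) = 2 / (1 - H ^ 2) := by
    have : 1 - 2 * H + 1 ≠ 0 := by linarith
    have : 3 - (1 - 2 * H) ≠ 0 := by linarith
    have : 1 - H ^ 2 ≠ 0 := by nlinarith
    field_simp
    ring
  simpa only [hr4, hr_exp, h_const] using
    lintegral_abs_rpow_div_pow_four_add_pow_four_le (a := 1 - 2 * H) (by linarith) (by linarith) hr

theorem setLIntegral_prod_univ_le {H T : ℝ} (hH0 : 0 < H) (hH1 : H < 1) (hT : 0 < T) :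
    ∫⁻ q in {τ : ℝ | T ≤ |τ|} ×ˢ univ,
        ENNReal.ofReal (|q.2| ^ (1 - 2 * H) / (q.2 ^ 4 + q.1 ^ 2)) ≤
      ENNReal.ofReal (4 / (H * (1 - H ^ 2)) * T ^ (-H)) := by
  have hK : 0 ≤ 2 / (1 - H ^ 2) := div_nonneg zero_le_two (by nlinarith)
  rw [Measure.volume_eq_prod, setLIntegral_prod _ (by fun_prop)]
  calc ∫⁻ τ in {τ | T ≤ |τ|}, ∫⁻ ξ in univ, ENNReal.ofReal (|ξ| ^ (1 - 2 * H) / (ξ ^ 4 + τ ^ 2))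
      ≤ ∫⁻ τ in {τ | T ≤ |τ|},
          ENNReal.ofReal (2 / (1 - H ^ 2)) * ENNReal.ofReal (|τ| ^ (-1 - H)) :=
        setLIntegral_mono (by fun_prop) fun τ hτ => by
          rw [Measure.restrict_univ, ← ENNReal.ofReal_mul hK]
          exact lintegral_abs_rpow_div_pow_four_add_sq_le (by linarith) hH1
            (abs_pos.1 (hT.trans_le hτ))
    _ = ENNReal.ofReal (4 / (H * (1 - H ^ 2)) * T ^ (-H)) := by
        rw [lintegral_const_mul' _ _ ENNReal.ofReal_ne_top,
          setLIntegral_abs_rpow_of_le_abs (by linarith) hT, ← ENNReal.ofReal_mul hK,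
          show -1 - H + 1 = -H by ring, neg_neg]
        have : H ≠ 0 := hH0.ne'
        have : 1 - H ^ 2 ≠ 0 := by nlinarith
        congr 1
        field_simp
        ring

theorem setLIntegral_prod_Ioo_le {a T S : ℝ} (ha : a < 3) (hS : 0 < S) :
    ∫⁻ q in Ioo (-T) T ×ˢ {ξ : ℝ | S ≤ |ξ|}, ENNReal.ofReal (|q.2| ^ a / (q.2 ^ 4 + q.1 ^ 2)) ≤
      ENNReal.ofReal (4 / (3 - a) * (T * S ^ (a - 3))) := by
  rw [Measure.volume_eq_prod, setLIntegral_prod _ (by fun_prop)]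
  calc ∫⁻ τ in Ioo (-T) T, ∫⁻ ξ in {ξ | S ≤ |ξ|}, ENNReal.ofReal (|ξ| ^ a / (ξ ^ 4 + τ ^ 2))
      ≤ ∫⁻ _ in Ioo (-T) T, ENNReal.ofReal (2 * S ^ (a - 3) / (3 - a)) :=
        setLIntegral_mono measurable_const fun τ _ =>
          setLIntegral_abs_rpow_div_pow_four_add_le_of_le_abs ha hS (sq_nonneg τ)
    _ = ENNReal.ofReal (4 / (3 - a) * (T * S ^ (a - 3))) := by
        rw [setLIntegral_const, Real.volume_Ioo,
          ← ENNReal.ofReal_mul (div_nonneg (by positivity) (by linarith))]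
        congr 1
        ring

theorem setOf_le_max_rpow_subset {α β b : ℝ} (hα : 0 < α) (hβ : 0 < β) (hb : 0 ≤ b) :
    {q : ℝ × ℝ | b ≤ max (|q.1| ^ α) (|q.2| ^ β)} ⊆
      {τ | b ^ α⁻¹ ≤ |τ|} ×ˢ univ ∪ Ioo (-b ^ α⁻¹) (b ^ α⁻¹) ×ˢ {ξ | b ^ β⁻¹ ≤ |ξ|} := by
  intro q hq
  by_cases hτ : b ^ α⁻¹ ≤ |q.1|
  · exact Or.inl ⟨hτ, trivial⟩
  · refine Or.inr ⟨abs_lt.1 (not_le.1 hτ), ?_⟩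
    rw [rpow_inv_le_iff_of_pos hb (abs_nonneg _) hα] at hτ
    exact (rpow_inv_le_iff_of_pos hb (abs_nonneg _) hβ).2 ((le_max_iff.1 hq).resolve_left hτ)

theorem stmt10 (H b : ℝ) (hH0 : 0 < H) (hH1 : H < 1) (hb : 0 < b) :
    (∫ q in {q : ℝ × ℝ | b ≤ max (|q.1| ^ (H / 2)) (|q.2| ^ H)},
        |q.2| ^ (1 - 2 * H) / (q.2 ^ 4 + q.1 ^ 2)) ≤
      (2 * (2 - H) / (H * (1 - H))) * b ^ (-2 : ℝ) := by
  set T := b ^ (H / 2)⁻¹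
  set S := b ^ H⁻¹
  have hT : T ^ (-H) = b ^ (-2 : ℝ) := by
    rw [← rpow_mul hb.le]
    congr 1
    field_simp
  have hTS : T * S ^ (1 - 2 * H - 3) = b ^ (-2 : ℝ) := by
    rw [← rpow_mul hb.le, ← rpow_add hb]
    congr 1
    field_simp
    ring
  have h_rhs : 0 ≤ 2 * (2 - H) / (H * (1 - H)) * b ^ (-2 : ℝ) :=
    mul_nonneg (div_nonneg (by linarith) (by nlinarith)) (by positivity)
  rw [integral_eq_lintegral_of_nonneg_ae (ae_of_all _ fun q => by positivity)
    (by fun_prop : Measurable _).aestronglyMeasurable]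
  refine ENNReal.toReal_le_of_le_ofReal h_rhs ?_
  calc _ ≤ _ := lintegral_mono_set (setOf_le_max_rpow_subset (by positivity) hH0 hb.le)
    _ ≤ _ := lintegral_union_le _ _ _
    _ ≤ ENNReal.ofReal (4 / (H * (1 - H ^ 2)) * T ^ (-H)) +
          ENNReal.ofReal (4 / (3 - (1 - 2 * H)) * (T * S ^ (1 - 2 * H - 3))) :=
        add_le_add (setLIntegral_prod_univ_le hH0 hH1 (by positivity))
          (setLIntegral_prod_Ioo_le (by linarith) (by positivity))
    _ = ENNReal.ofReal (2 * (2 - H) / (H * (1 - H)) * b ^ (-2 : ℝ)) := by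
        have : 1 - H ≠ 0 := by linarith
        have : 1 + H ≠ 0 := by linarith
        have h_sq : 0 < 1 - H ^ 2 := by nlinarith
        rw [hT, hTS, ← ENNReal.ofReal_add
          (mul_nonneg (div_nonneg zero_le_four (mul_pos hH0 h_sq).le) (by positivity))
          (mul_nonneg (div_nonneg zero_le_four (by linarith)) (by positivity)),
          show 3 - (1 - 2 * H) = 2 * (1 + H) by ring]
        congr 1
        field_simp
        ring
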